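/- For positive reals b, c, the following are equivalent: (1) b = c; (2) 𝒴_b = 𝒴_c; (3) dist(𝒴_b, 𝒴_c) = 0, where dist(ℱ,𝒢) = sup{ inf{ d(Φ,Ψ) : Ψ ∈ 𝒢 } : Φ ∈ ℱ } and d is the weighted L² semi-metric. -/

import Mathlib

open MeasureTheory Set Filter

def IsCYFPair (Φ φ : ℝ → ℝ) : Prop :=
  (∀ t ∈ Set.Ioi (0:ℝ), 0 < φ t) ∧
  (∀ s ∈ Set.Ioi (0:ℝ), ∀ t ∈ Set.Ioi (0:ℝ), s ≤ t → φ t ≤ φ s) ∧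
  (∀ t ∈ Set.Ioi (0:ℝ), ContinuousWithinAt φ (Set.Ici t) t) ∧
  (∀ x ∈ Set.Ioi (0:ℝ), IntegrableOn φ (Set.Ioc 0 x)) ∧
  (∀ x ∈ Set.Ici (0:ℝ), Φ x = ∫ t in Set.Ioc 0 x, φ t) ∧
  Filter.Tendsto Φ Filter.atTop Filter.atTop

def YConc : Set (ℝ → ℝ) := {Φ | ∃ φ, IsCYFPair Φ φ}

def Aset : Set (ℝ → ℝ) :=
  {Φ | ∃ φ, IsCYFPair Φ φ ∧ MeasureTheory.IntegrableOn (fun t => φ t / t) (Set.Ioi 1)}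

noncomputable def dY (Φ Ψ : ℝ → ℝ) : ℝ :=
  Real.sqrt (∫ x in Set.Ioi (0:ℝ), (Φ x - Ψ x)^2 / (x+1)^4)

def Yb (b : ℝ) : Set (ℝ → ℝ) := {Φ | Φ ∈ YConc ∧ Φ b = b}
def AbS (b : ℝ) : Set (ℝ → ℝ) := {Φ | Φ ∈ Aset ∧ Φ b = b}

noncomputable def distSet (F G : Set (ℝ → ℝ)) : ℝ :=
  sSup {r : ℝ | ∃ Φ ∈ F, r = sInf {s : ℝ | ∃ Ψ ∈ G, s = dY Φ Ψ}}

/-!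
For `b ≠ c`, the piecewise linear Young function `separator b c ∈ Yb b`, equal to `(b + x) / 2`
from `min b c` on, takes the value `(b + c) / 2 ≠ c` at `c`, so `Yb b ≠ Yb c`. For `Ψ ∈ Yb c`
concavity makes `Ψ x / x` antitone, so `c ≤ Ψ x ≤ x` for `x ≥ c`; hence on `(c, c + |b - c| / 2]`
the separator and `Ψ` differ by at least `|b - c| / 4`, a uniform positive lower bound for
`dY (separator b c) Ψ`. The bound `0 ≤ Φ x ≤ b + x` on `Yb b` keeps every `dY Φ id` below
`(b + c + 1) √(π / 2)`, so the set whose `sSup` is `distSet` is bounded above (otherwise `sSup`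
would be the junk value `0`), and its supremum is positive.
-/

open Real Topology

namespace IsCYFPair

variable {Φ φ : ℝ → ℝ} {x y : ℝ}

theorem apply_zero (h : IsCYFPair Φ φ) : Φ 0 = 0 := by
  simp [h.2.2.2.2.1 0 self_mem_Ici]

theorem integrableOn_Ioc (h : IsCYFPair Φ φ) (hx : 0 ≤ x) : IntegrableOn φ (Ioc x y) := by
  rcases le_or_gt y 0 with hy | hy
  · simp [Ioc_eq_empty_of_le (hy.trans hx)]
  · exact (h.2.2.2.1 y hy).mono_set (Ioc_subset_Ioc_left hx)

theorem apply_eq_add_integral (h : IsCYFPair Φ φ) (hx : 0 ≤ x) (hxy : x ≤ y) :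
    Φ y = Φ x + ∫ t in Ioc x y, φ t := by
  rw [h.2.2.2.2.1 y (hx.trans hxy), h.2.2.2.2.1 x hx, ← Ioc_union_Ioc_eq_Ioc hx hxy,
    setIntegral_union (Ioc_disjoint_Ioc_of_le le_rfl) measurableSet_Ioc
      (h.integrableOn_Ioc le_rfl) (h.integrableOn_Ioc hx)]

theorem monotoneOn (h : IsCYFPair Φ φ) : MonotoneOn Φ (Ici 0) := by
  intro x hx y _ hxy
  rw [h.apply_eq_add_integral hx hxy, le_add_iff_nonneg_right]
  exact setIntegral_nonneg measurableSet_Ioc fun t ht => (h.1 t (lt_of_le_of_lt hx ht.1)).le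

theorem nonneg (h : IsCYFPair Φ φ) (hx : 0 ≤ x) : 0 ≤ Φ x :=
  h.apply_zero ▸ h.monotoneOn self_mem_Ici hx hx

theorem aemeasurable (h : IsCYFPair Φ φ) : AEMeasurable Φ (volume.restrict (Ioi 0)) :=
  aemeasurable_restrict_of_monotoneOn measurableSet_Ioi
    (h.monotoneOn.mono fun _ hx => le_of_lt (mem_Ioi.1 hx))

theorem integral_Ioc_le (h : IsCYFPair Φ φ) (hx : 0 < x) (hxy : x ≤ y) :
    ∫ t in Ioc x y, φ t ≤ (y - x) * φ x := by
  calc ∫ t in Ioc x y, φ t ≤ ∫ _ in Ioc x y, φ x :=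
        setIntegral_mono_on (h.integrableOn_Ioc hx.le) (integrableOn_const (by simp))
          measurableSet_Ioc fun t ht => h.2.1 x hx t (hx.trans ht.1) ht.1.le
    _ = (y - x) * φ x := by
        rw [setIntegral_const, Real.volume_real_Ioc_of_le hxy, smul_eq_mul]

theorem mul_density_le (h : IsCYFPair Φ φ) (hx : 0 < x) : x * φ x ≤ Φ x := by
  calc x * φ x = ∫ _ in Ioc 0 x, φ x := by
        rw [setIntegral_const, Real.volume_real_Ioc_of_le hx.le, smul_eq_mul, sub_zero]
    _ ≤ ∫ t in Ioc 0 x, φ t :=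
        setIntegral_mono_on (integrableOn_const (by simp)) (h.integrableOn_Ioc le_rfl)
          measurableSet_Ioc fun t ht => h.2.1 t ht.1 x hx ht.2
    _ = Φ x := (h.2.2.2.2.1 x hx.le).symm

theorem mul_apply_le_mul_apply (h : IsCYFPair Φ φ) (hx : 0 < x) (hxy : x ≤ y) :
    x * Φ y ≤ y * Φ x := by
  have hint := h.integral_Ioc_le hx hxy
  have hdens := h.mul_density_le hx
  rw [h.apply_eq_add_integral hx.le hxy]
  nlinarith [mul_le_mul_of_nonneg_left hint hx.le,
    mul_le_mul_of_nonneg_left hdens (sub_nonneg.2 hxy)]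

end IsCYFPair

theorem aemeasurable_of_mem_YConc {Φ : ℝ → ℝ} (hΦ : Φ ∈ YConc) :
    AEMeasurable Φ (volume.restrict (Ioi 0)) :=
  let ⟨_, h⟩ := hΦ
  h.aemeasurable

section Yb

variable {b c x : ℝ} {Φ Ψ : ℝ → ℝ}

theorem le_self_of_mem_Yb (hc : 0 < c) (hΨ : Ψ ∈ Yb c) (hx : c ≤ x) : Ψ x ≤ x := by
  obtain ⟨⟨ψ, h⟩, hΨc⟩ := hΨ
  have := h.mul_apply_le_mul_apply hc hx
  rw [hΨc, mul_comm x] at this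
  exact le_of_mul_le_mul_left this hc

theorem le_of_mem_Yb (hc : 0 < c) (hΨ : Ψ ∈ Yb c) (hx : c ≤ x) : c ≤ Ψ x := by
  obtain ⟨⟨ψ, h⟩, hΨc⟩ := hΨ
  exact hΨc ▸ h.monotoneOn (mem_Ici.2 hc.le) (mem_Ici.2 (hc.le.trans hx)) hx

theorem mem_Icc_of_mem_Yb (hc : 0 < c) (hΨ : Ψ ∈ Yb c) (hx : 0 ≤ x) : Ψ x ∈ Icc 0 (c + x) := by
  obtain ⟨⟨ψ, h⟩, hΨc⟩ := hΨ
  refine ⟨h.nonneg hx, ?_⟩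
  rcases le_total x c with hxc | hcx
  · linarith [hΨc ▸ h.monotoneOn (mem_Ici.2 hx) (mem_Ici.2 hc.le) hxc]
  · linarith [le_self_of_mem_Yb hc ⟨⟨ψ, h⟩, hΨc⟩ hcx]

theorem abs_sub_le_of_mem_Yb (hb : 0 < b) (hc : 0 < c) (hΦ : Φ ∈ Yb b) (hΨ : Ψ ∈ Yb c)
    (hx : 0 ≤ x) : |Φ x - Ψ x| ≤ (b + c + 1) * (x + 1) := by
  obtain ⟨hΦ₀, hΦ₁⟩ := mem_Icc_of_mem_Yb hb hΦ hx
  obtain ⟨hΨ₀, hΨ₁⟩ := mem_Icc_of_mem_Yb hc hΨ hx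
  rw [abs_le]
  constructor <;> nlinarith

end Yb

theorem id_mem_Yb (b : ℝ) : (fun x : ℝ => x) ∈ Yb b := by
  refine ⟨⟨fun _ => 1, fun _ _ => one_pos, fun _ _ _ _ _ => le_rfl,
    fun _ _ => continuousWithinAt_const, fun _ _ => integrableOn_const (by simp), ?_, tendsto_id⟩,
    rfl⟩
  intro x hx
  rw [setIntegral_const, Real.volume_real_Ioc_of_le hx, smul_eq_mul, sub_zero, mul_one]

noncomputable def twoSlope (s d β x : ℝ) : ℝ := s * x + d * min x β

noncomputable def twoSlopeDensity (s d β t : ℝ) : ℝ := if t < β then s + d else s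

section twoSlope

variable {s d β : ℝ}

theorem antitone_twoSlopeDensity (hd : 0 ≤ d) : Antitone (twoSlopeDensity s d β) := by
  intro t u htu
  unfold twoSlopeDensity
  split_ifs <;> linarith

theorem twoSlopeDensity_eventuallyEq (t : ℝ) :
    ∀ᶠ u in 𝓝[≥] t, twoSlopeDensity s d β u = twoSlopeDensity s d β t := by
  by_cases ht : t < β
  · filter_upwards [mem_nhdsWithin_of_mem_nhds (Iio_mem_nhds ht)] with u hu
    simp [twoSlopeDensity, ht, mem_Iio.1 hu]
  · filter_upwards [self_mem_nhdsWithin] with u hu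
    simp [twoSlopeDensity, ht, not_lt.2 ((not_lt.1 ht).trans hu)]

theorem twoSlope_eventuallyEq (t : ℝ) :
    ∀ᶠ x in 𝓝[≥] t, twoSlope s d β x = twoSlope s d β t + twoSlopeDensity s d β t * (x - t) := by
  by_cases ht : t < β
  · filter_upwards [mem_nhdsWithin_of_mem_nhds (Iio_mem_nhds ht)] with x hx
    simp only [twoSlope, twoSlopeDensity, if_pos ht, min_eq_left (mem_Iio.1 hx).le,
      min_eq_left ht.le]
    ring
  · filter_upwards [self_mem_nhdsWithin] with x hx
    have hβ : β ≤ t := not_lt.1 ht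
    simp only [twoSlope, twoSlopeDensity, if_neg ht, min_eq_right hβ,
      min_eq_right (hβ.trans hx)]
    ring

theorem hasDerivWithinAt_twoSlope (t : ℝ) :
    HasDerivWithinAt (twoSlope s d β) (twoSlopeDensity s d β t) (Ici t) t := by
  have hline : HasDerivWithinAt
      (fun x => twoSlope s d β t + twoSlopeDensity s d β t * (x - t))
      (twoSlopeDensity s d β t) (Ici t) t := by
    simpa using (((hasDerivAt_id t).sub_const t).const_mul
      (twoSlopeDensity s d β t)).const_add (twoSlope s d β t) |>.hasDerivWithinAt
  exact hline.congr_of_eventuallyEq (twoSlope_eventuallyEq t) (by simp)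

theorem integral_twoSlopeDensity (hd : 0 ≤ d) (hβ : 0 ≤ β) {x : ℝ} (hx : 0 ≤ x) :
    ∫ t in Ioc 0 x, twoSlopeDensity s d β t = twoSlope s d β x := by
  rw [← intervalIntegral.integral_of_le hx,
    intervalIntegral.integral_eq_sub_of_hasDeriv_right_of_le hx
      (show Continuous (twoSlope s d β) by unfold twoSlope; fun_prop).continuousOn
      (fun t _ => (hasDerivWithinAt_twoSlope t).mono Ioi_subset_Ici_self)
      (antitone_twoSlopeDensity hd).intervalIntegrable]
  simp [twoSlope, hβ]

theorem isCYFPair_twoSlope (hs : 0 < s) (hd : 0 ≤ d) (hβ : 0 ≤ β) :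
    IsCYFPair (twoSlope s d β) (twoSlopeDensity s d β) := by
  refine ⟨fun t _ => ?_, fun u _ t _ hut => antitone_twoSlopeDensity hd hut,
    fun t _ => continuousWithinAt_const.congr_of_eventuallyEq
      (twoSlopeDensity_eventuallyEq t) rfl,
    fun x _ => (antitone_twoSlopeDensity hd).intervalIntegrable.1,
    fun x hx => (integral_twoSlopeDensity hd hβ hx).symm, ?_⟩
  · unfold twoSlopeDensity; split_ifs <;> linarith
  · refine Tendsto.congr' ?_
      (tendsto_atTop_add_const_right _ (d * β) (tendsto_id.const_mul_atTop hs))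
    filter_upwards [eventually_ge_atTop β] with x hx
    simp [twoSlope, min_eq_right hx]

end twoSlope

noncomputable def separator (b c : ℝ) : ℝ → ℝ := twoSlope (1 / 2) (b / (2 * min b c)) (min b c)

section separator

variable {b c : ℝ}

theorem separator_apply_of_le (hb : 0 < b) (hc : 0 < c) {x : ℝ} (hx : min b c ≤ x) :
    separator b c x = (b + x) / 2 := by
  have hβ : 0 < min b c := lt_min hb hc
  simp only [separator, twoSlope, min_eq_right hx]
  field_simp
  ring

theorem separator_mem_Yb (hb : 0 < b) (hc : 0 < c) : separator b c ∈ Yb b := by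
  have hβ : 0 < min b c := lt_min hb hc
  refine ⟨⟨_, isCYFPair_twoSlope one_half_pos (by positivity) hβ.le⟩, ?_⟩
  rw [separator_apply_of_le hb hc (min_le_left b c)]
  ring

theorem le_abs_separator_sub (hb : 0 < b) (hc : 0 < c) {Ψ : ℝ → ℝ} (hΨ : Ψ ∈ Yb c) {x : ℝ}
    (hx : x ∈ Ioc c (c + |b - c| / 2)) : |b - c| / 4 ≤ |separator b c x - Ψ x| := by
  rw [separator_apply_of_le hb hc ((min_le_right b c).trans hx.1.le)]
  have hΨx := le_self_of_mem_Yb hc hΨ hx.1.le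
  have hcΨ := le_of_mem_Yb hc hΨ hx.1.le
  have hx₂ := hx.2
  rcases le_total c b with hcb | hbc
  · rw [abs_of_nonneg (sub_nonneg.2 hcb)] at hx₂ ⊢
    exact le_abs.2 (Or.inl (by linarith))
  · rw [abs_of_nonpos (sub_nonpos.2 hbc)] at hx₂ ⊢
    exact le_abs.2 (Or.inr (by linarith))

end separator

theorem sq_div_pow_four_le {f K x : ℝ} (hx : 0 ≤ x) (hf : |f| ≤ K * (x + 1)) :
    f ^ 2 / (x + 1) ^ 4 ≤ K ^ 2 * (1 + x ^ 2)⁻¹ := by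
  have hf2 : f ^ 2 ≤ (K * (x + 1)) ^ 2 := sq_abs f ▸ pow_le_pow_left₀ (abs_nonneg f) hf 2
  calc f ^ 2 / (x + 1) ^ 4 ≤ (K * (x + 1)) ^ 2 / (x + 1) ^ 4 := by gcongr
    _ = K ^ 2 / (x + 1) ^ 2 := by field_simp
    _ ≤ K ^ 2 / (1 + x ^ 2) := by gcongr; nlinarith
    _ = K ^ 2 * (1 + x ^ 2)⁻¹ := div_eq_mul_inv _ _

theorem mul_le_integral_of_le_abs {f : ℝ → ℝ}
    (hf : IntegrableOn (fun x => f x ^ 2 / (x + 1) ^ 4) (Ioi 0)) {a h ρ : ℝ} (ha : 0 ≤ a)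
    (hh : 0 ≤ h) (hρ : 0 ≤ ρ) (hfρ : ∀ x ∈ Ioc a (a + h), ρ ≤ |f x|) :
    h * (ρ ^ 2 / (a + h + 1) ^ 4) ≤ ∫ x in Ioi 0, f x ^ 2 / (x + 1) ^ 4 := by
  have hsub : Ioc a (a + h) ⊆ Ioi 0 := fun x hx => ha.trans_lt hx.1
  have hpoint : ∀ x ∈ Ioc a (a + h), ρ ^ 2 / (a + h + 1) ^ 4 ≤ f x ^ 2 / (x + 1) ^ 4 := by
    intro x hx
    have hx₀ : 0 < x + 1 := by linarith [mem_Ioi.1 (hsub hx)]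
    rw [← sq_abs (f x)]
    gcongr
    · exact hfρ x hx
    · exact hx.2
  calc h * (ρ ^ 2 / (a + h + 1) ^ 4) = ∫ _ in Ioc a (a + h), ρ ^ 2 / (a + h + 1) ^ 4 := by
        rw [setIntegral_const, Real.volume_real_Ioc_of_le (by linarith), smul_eq_mul,
          add_sub_cancel_left]
    _ ≤ ∫ x in Ioc a (a + h), f x ^ 2 / (x + 1) ^ 4 :=
        setIntegral_mono_on (integrableOn_const (by simp)) (hf.mono_set hsub) measurableSet_Ioc
          hpoint
    _ ≤ ∫ x in Ioi 0, f x ^ 2 / (x + 1) ^ 4 :=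
        setIntegral_mono_set hf (ae_of_all _ fun x => by positivity) hsub.eventuallyLE

section dY

variable {b c : ℝ} {Φ Ψ : ℝ → ℝ}

theorem dY_self (Φ : ℝ → ℝ) : dY Φ Φ = 0 := by
  simp [dY]

theorem bddBelow_dY (Φ : ℝ → ℝ) (G : Set (ℝ → ℝ)) : BddBelow {s | ∃ Ψ ∈ G, s = dY Φ Ψ} :=
  ⟨0, by rintro s ⟨Ψ, -, rfl⟩; exact Real.sqrt_nonneg _⟩

theorem dY_integrand_le (hb : 0 < b) (hc : 0 < c) (hΦ : Φ ∈ Yb b) (hΨ : Ψ ∈ Yb c) {x : ℝ}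
    (hx : x ∈ Ioi 0) : (Φ x - Ψ x) ^ 2 / (x + 1) ^ 4 ≤ (b + c + 1) ^ 2 * (1 + x ^ 2)⁻¹ :=
  sq_div_pow_four_le (le_of_lt hx) (abs_sub_le_of_mem_Yb hb hc hΦ hΨ (le_of_lt hx))

theorem integrableOn_dY_integrand (hb : 0 < b) (hc : 0 < c) (hΦ : Φ ∈ Yb b) (hΨ : Ψ ∈ Yb c) :
    IntegrableOn (fun x => (Φ x - Ψ x) ^ 2 / (x + 1) ^ 4) (Ioi 0) := by
  refine (integrable_inv_one_add_sq.integrableOn.const_mul ((b + c + 1) ^ 2)).mono'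
    (((((aemeasurable_of_mem_YConc hΦ.1).sub (aemeasurable_of_mem_YConc hΨ.1)).pow_const 2).div
      (by fun_prop : Measurable fun x : ℝ => (x + 1) ^ 4).aemeasurable).aestronglyMeasurable)
    ((ae_restrict_iff' measurableSet_Ioi).2 (ae_of_all _ fun x hx => ?_))
  rw [Real.norm_of_nonneg (by positivity)]
  exact dY_integrand_le hb hc hΦ hΨ hx

theorem dY_le (hb : 0 < b) (hc : 0 < c) (hΦ : Φ ∈ Yb b) (hΨ : Ψ ∈ Yb c) :
    dY Φ Ψ ≤ (b + c + 1) * √(π / 2) := by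
  have hint : ∫ x in Ioi 0, (Φ x - Ψ x) ^ 2 / (x + 1) ^ 4 ≤ (b + c + 1) ^ 2 * (π / 2) :=
    calc ∫ x in Ioi 0, (Φ x - Ψ x) ^ 2 / (x + 1) ^ 4
        ≤ ∫ x in Ioi 0, (b + c + 1) ^ 2 * (1 + x ^ 2)⁻¹ :=
          setIntegral_mono_on (integrableOn_dY_integrand hb hc hΦ hΨ)
            (integrable_inv_one_add_sq.integrableOn.const_mul _) measurableSet_Ioi
            fun x hx => dY_integrand_le hb hc hΦ hΨ hx
      _ = (b + c + 1) ^ 2 * (π / 2) := by simp [integral_const_mul]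
  calc dY Φ Ψ ≤ √((b + c + 1) ^ 2 * (π / 2)) := Real.sqrt_le_sqrt hint
    _ = (b + c + 1) * √(π / 2) := by
        rw [Real.sqrt_mul (by positivity), Real.sqrt_sq (by positivity)]

theorem exists_pos_le_dY_separator (hb : 0 < b) (hc : 0 < c) (hne : b ≠ c) :
    ∃ κ > 0, ∀ Ψ ∈ Yb c, κ ≤ dY (separator b c) Ψ := by
  set δ := |b - c|
  have hδ : 0 < δ := abs_pos.2 (sub_ne_zero.2 hne)
  refine ⟨√(δ / 2 * ((δ / 4) ^ 2 / (c + δ / 2 + 1) ^ 4)), by positivity, fun Ψ hΨ => ?_⟩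
  exact Real.sqrt_le_sqrt (mul_le_integral_of_le_abs
    (integrableOn_dY_integrand hb hc (separator_mem_Yb hb hc) hΨ) hc.le (by positivity)
    (by positivity) fun x hx => le_abs_separator_sub hb hc hΨ hx)

end dY

theorem distSet_self (F : Set (ℝ → ℝ)) : distSet F F = 0 := by
  refine le_antisymm (Real.sSup_nonpos ?_) (Real.sSup_nonneg ?_) <;> rintro r ⟨Φ, hΦ, rfl⟩
  · exact (csInf_le (bddBelow_dY Φ F) ⟨Φ, hΦ, rfl⟩).trans_eq (dY_self Φ)
  · exact Real.sInf_nonneg (by rintro s ⟨Ψ, -, rfl⟩; exact Real.sqrt_nonneg _)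

theorem distSet_pos {F G : Set (ℝ → ℝ)} {Φ₀ : ℝ → ℝ} (hΦ₀ : Φ₀ ∈ F) {κ M : ℝ} (hκ : 0 < κ)
    (hlow : ∀ Ψ ∈ G, κ ≤ dY Φ₀ Ψ) (hup : ∀ Φ ∈ F, ∃ Ψ ∈ G, dY Φ Ψ ≤ M) :
    0 < distSet F G := by
  obtain ⟨Ψ₀, hΨ₀, -⟩ := hup Φ₀ hΦ₀
  have hbdd : BddAbove {r | ∃ Φ ∈ F, r = sInf {s | ∃ Ψ ∈ G, s = dY Φ Ψ}} := by
    refine ⟨M, ?_⟩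
    rintro r ⟨Φ, hΦ, rfl⟩
    obtain ⟨Ψ, hΨ, hle⟩ := hup Φ hΦ
    exact (csInf_le (bddBelow_dY Φ G) ⟨Ψ, hΨ, rfl⟩).trans hle
  calc 0 < κ := hκ
    _ ≤ sInf {s | ∃ Ψ ∈ G, s = dY Φ₀ Ψ} :=
        le_csInf ⟨_, Ψ₀, hΨ₀, rfl⟩ (by rintro s ⟨Ψ, hΨ, rfl⟩; exact hlow Ψ hΨ)
    _ ≤ distSet F G := le_csSup hbdd ⟨Φ₀, hΦ₀, rfl⟩

theorem stmt_13 (b c : ℝ) (hb : 0 < b) (hc : 0 < c) :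
    (b = c ↔ Yb b = Yb c) ∧ (b = c ↔ distSet (Yb b) (Yb c) = 0) := by
  have hsep := separator_mem_Yb hb hc
  refine ⟨⟨by rintro rfl; rfl, fun hY => ?_⟩, ⟨by rintro rfl; exact distSet_self _, fun hd => ?_⟩⟩
  · have hsep_c : separator b c c = c := (hY ▸ hsep).2
    rw [separator_apply_of_le hb hc (min_le_right b c)] at hsep_c
    linarith
  · by_contra hne
    obtain ⟨κ, hκ, hlow⟩ := exists_pos_le_dY_separator hb hc hne
    exact (distSet_pos hsep hκ hlow fun Φ hΦ =>
      ⟨_, id_mem_Yb c, dY_le hb hc hΦ (id_mem_Yb c)⟩).ne' hd
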